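/- arXiv:1503.03644 — 2 statements merged into one kernel-verified Lean document; each statement's English description precedes it below -/
import Mathlib

section
/- Let U₁ and Ũ₁ be open subsets of ℝ^N and T : U₁ → Ũ₁ a bi-W^{1,∞} mapping with constant C̃. Let B_{ρ̃ᵢ}(z̃ᵢ), i = 0,…,n, be a regular chain with respect to Ũ₁ with constants 0 < ã₁ < ã₂ < ã₃ < 1 < ã₄. Set zᵢ = T^{-1}(z̃ᵢ) and ρᵢ = ρ̃ᵢ/C̃ for i = 0,…,n, and let a₁ = ã₁, a₄ = ã₄. Then B_{ρᵢ}(zᵢ), i = 0,…,n, is a regular chain with respect to U₁ with constants 0 < a₁ < a₂ < a₃ < 1 < a₄, provided a₁ < C̃²ã₂ ≤ a₂ < a₃ < 1 and a₁ < C̃²ã₃ ≤ a₃ < 1. -/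
open Metric Set MeasureTheory
open scoped RealInnerProductSpace ENNReal NNReal Topology

noncomputable section

/-- `ℝ^N` with the Euclidean structure. -/
abbrev Euc (N : ℕ) : Type := EuclideanSpace ℝ (Fin N)

namespace Scat

variable {N : ℕ}

/-! ### Basic helpers -/

/-- The index of the last coordinate. -/
def idxLast (N : ℕ) (hN : 1 ≤ N) : Fin N := ⟨N - 1, by omega⟩

/-- The index of the second-to-last coordinate. -/
def idxPenult (N : ℕ) (hN : 2 ≤ N) : Fin N := ⟨N - 2, by omega⟩

/-- Coordinates of `y` relative to the origin `x` and the orthonormal frame `b`. -/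
def gcoord (b : OrthonormalBasis (Fin N) ℝ (Euc N)) (x y : Euc N) (i : Fin N) : ℝ :=
  ⟪y - x, b i⟫

/-- The first `N - 1` coordinates `y'` of `y` relative to origin `x` and frame `b`. -/
def initCoords (b : OrthonormalBasis (Fin N) ℝ (Euc N)) (x y : Euc N) : Euc (N - 1) :=
  (EuclideanSpace.equiv (Fin (N - 1)) ℝ).symm fun i =>
    gcoord b x y (Fin.castLE (Nat.sub_le N 1) i)

/-- The first `N - 2` coordinates `y''` of `y` relative to origin `x` and frame `b`. -/
def initCoords2 (b : OrthonormalBasis (Fin N) ℝ (Euc N)) (x y : Euc N) : Euc (N - 2) :=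
  (EuclideanSpace.equiv (Fin (N - 2)) ℝ).symm fun i =>
    gcoord b x y (Fin.castLE (Nat.sub_le N 2) i)

/-- Sup norm of a complex-valued function on a set. -/
def supNormC {α : Type*} (u : α → ℂ) (s : Set α) : ℝ := sSup ((fun x => ‖u x‖) '' s)

/-- The distance `d(v̂₁, v̂₂) = min {‖v₁ - v₂‖, ‖v₁ + v₂‖}` between unoriented directions. -/
def hatDist (v w : Euc N) : ℝ := min ‖v - w‖ ‖v + w‖

/-- A nondecreasing, left-continuous, positive function on `(0, ∞)`. -/
def IsModulus (δ : ℝ → ℝ) : Prop :=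
  (∀ t, 0 < t → 0 < δ t) ∧ MonotoneOn δ (Ioi (0 : ℝ)) ∧
    ∀ t, 0 < t → ContinuousWithinAt δ (Iio t) t

/-- Uniform exterior connectedness of the compact set `S` with function `δ`. -/
def UnifExtConn (S : Set (Euc N)) (δ : ℝ → ℝ) : Prop :=
  ∀ t, 0 < t → ∀ x₁ x₂ : Euc N, ball x₁ t ⊆ Sᶜ → ball x₂ t ⊆ Sᶜ →
    ∀ s, 0 < s → s < δ t →
      ∃ γ : ℝ → Euc N, ContDiff ℝ 1 γ ∧ γ 0 = x₁ ∧ γ 1 = x₂ ∧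
        ∀ p ∈ γ '' Icc (0 : ℝ) 1, ball p s ⊆ Sᶜ

/-! ### Lipschitz hypersurfaces (graph definition) -/

/-- The `L`-Lipschitz graph representation of `K` in `B_r(x)` given by the frame `b` and the
function `φ`:  `B_r(x) ∩ K ⊆ {y ∈ B_r(x) : y_N = φ(y')}` in the coordinates of `b` centred
at `x`. -/
def LipGraphAt (hN : 2 ≤ N) (r L : ℝ) (K : Set (Euc N)) (x : Euc N)
    (b : OrthonormalBasis (Fin N) ℝ (Euc N)) (φ : Euc (N - 1) → ℝ) : Prop :=
  φ 0 = 0 ∧ LipschitzWith (Real.toNNReal L) φ ∧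
    ∀ y ∈ ball x r ∩ K, gcoord b x y (idxLast N (by omega)) = φ (initCoords b x y)

/-- The interior-point condition for the representation `(b, φ)`: on some smaller ball the
inclusion in the graph is an equality. -/
def LipGraphInterior (hN : 2 ≤ N) (r : ℝ) (K : Set (Euc N)) (x : Euc N)
    (b : OrthonormalBasis (Fin N) ℝ (Euc N)) (φ : Euc (N - 1) → ℝ) : Prop :=
  ∃ δ, 0 < δ ∧ δ ≤ r ∧ ∀ y ∈ ball x δ,
    (y ∈ K ↔ gcoord b x y (idxLast N (by omega)) = φ (initCoords b x y))

/-- `x` is an interior point of the Lipschitz hypersurface `K`. -/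
def LipInteriorPt (hN : 2 ≤ N) (r L : ℝ) (K : Set (Euc N)) (x : Euc N) : Prop :=
  ∃ b φ, LipGraphAt hN r L K x b φ ∧ LipGraphInterior hN r K x b φ

/-- The boundary-point representation of `K` in `B_r(x)`:
`B_r(x) ∩ K = {y ∈ B_r(x) : y_N = φ(y'), y_{N-1} ≤ φ₁(y'')}`. -/
def LipGraphBdry (hN : 2 ≤ N) (r L : ℝ) (K : Set (Euc N)) (x : Euc N)
    (b : OrthonormalBasis (Fin N) ℝ (Euc N)) (φ : Euc (N - 1) → ℝ)
    (φ₁ : Euc (N - 2) → ℝ) : Prop :=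
  φ₁ 0 = 0 ∧ LipschitzWith (Real.toNNReal L) φ₁ ∧
    ∀ y ∈ ball x r, (y ∈ K ↔
      gcoord b x y (idxLast N (by omega)) = φ (initCoords b x y) ∧
      gcoord b x y (idxPenult N hN) ≤ φ₁ (initCoords2 b x y))

/-- `K` is a Lipschitz hypersurface (with or without boundary) with constants `r` and `L`. -/
def IsLipHyp (hN : 2 ≤ N) (r L : ℝ) (K : Set (Euc N)) : Prop :=
  IsCompact K ∧ (∀ x ∈ K, ∃ b φ, LipGraphAt hN r L K x b φ) ∧
    ∀ x ∈ K, ¬ LipInteriorPt hN r L K x →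
      ∃ b φ φ₁, LipGraphAt hN r L K x b φ ∧ LipGraphBdry hN r L K x b φ φ₁

/-- `K` is a strongly Lipschitz hypersurface with constants `r` and `L`: there is a choice
of frames realising the Lipschitz representations such that `x ↦ ê_N(x)` is `L`-Lipschitz on
`K` (for the distance `hatDist` on unoriented directions) and `x ↦ e_{N-1}(x)` is
`L`-Lipschitz on the boundary of `K`. -/
def IsStronglyLipHyp (hN : 2 ≤ N) (r L : ℝ) (K : Set (Euc N)) : Prop :=
  IsCompact K ∧
  ∃ (fr : Euc N → OrthonormalBasis (Fin N) ℝ (Euc N)) (φ : Euc N → Euc (N - 1) → ℝ),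
    (∀ x ∈ K, LipGraphAt hN r L K x (fr x) (φ x)) ∧
    (∀ x ∈ K, ¬ LipInteriorPt hN r L K x →
      ∃ φ₁, LipGraphBdry hN r L K x (fr x) (φ x) φ₁) ∧
    (∀ x ∈ K, ∀ y ∈ K,
      hatDist (fr x (idxLast N (by omega))) (fr y (idxLast N (by omega))) ≤ L * dist x y) ∧
    (∀ x ∈ K, ∀ y ∈ K, ¬ LipInteriorPt hN r L K x → ¬ LipInteriorPt hN r L K y →
      ‖fr x (idxPenult N hN) - fr y (idxPenult N hN)‖ ≤ L * dist x y)

/-! ### Mildly Lipschitz hypersurfaces -/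

/-- A mildly Lipschitz chart at `x`: a bi-Lipschitz map `Φ` of `B_r(x)` into `ℝ^N` with
`Φ(x) = 0` flattening `K` into the hyperplane `{y_N = 0}`. -/
def MildChartAt (hN : 2 ≤ N) (r L : ℝ) (K : Set (Euc N)) (x : Euc N) (Φ : Euc N → Euc N) :
    Prop :=
  (∀ z₁ ∈ ball x r, ∀ z₂ ∈ ball x r,
      L⁻¹ * ‖z₁ - z₂‖ ≤ ‖Φ z₁ - Φ z₂‖ ∧ ‖Φ z₁ - Φ z₂‖ ≤ L * ‖z₁ - z₂‖) ∧
  Φ x = 0 ∧ ∀ y ∈ K ∩ ball x r, Φ y (idxLast N (by omega)) = 0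

/-- The interior-point condition for the mild chart `Φ` at `x`. -/
def MildChartInterior (hN : 2 ≤ N) (r : ℝ) (K : Set (Euc N)) (x : Euc N)
    (Φ : Euc N → Euc N) : Prop :=
  ∃ δ, 0 < δ ∧ δ ≤ r ∧
    ∀ y : Euc N, ‖y‖ < δ → y (idxLast N (by omega)) = 0 → y ∈ Φ '' (K ∩ ball x r)

/-- `x` is an interior point of the mildly Lipschitz hypersurface `K`. -/
def MildInteriorPt (hN : 2 ≤ N) (r L : ℝ) (K : Set (Euc N)) (x : Euc N) : Prop :=
  ∃ Φ, MildChartAt hN r L K x Φ ∧ MildChartInterior hN r K x Φ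

/-- The boundary-point condition for the mild chart `Φ` at `x`:
`Φ(K ∩ B_r(x)) = Φ(B_r(x)) ∩ Π⁺`. -/
def MildChartBdry (hN : 2 ≤ N) (r : ℝ) (K : Set (Euc N)) (x : Euc N) (Φ : Euc N → Euc N) :
    Prop :=
  Φ '' (K ∩ ball x r) =
    (Φ '' ball x r) ∩ {y : Euc N | y (idxLast N (by omega)) = 0 ∧ 0 ≤ y (idxPenult N hN)}

/-- `K` is a mildly Lipschitz hypersurface with constants `r` and `L`. -/
def IsMildLipHyp (hN : 2 ≤ N) (r L : ℝ) (K : Set (Euc N)) : Prop :=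
  IsCompact K ∧ (∀ x ∈ K, ∃ Φ, MildChartAt hN r L K x Φ) ∧
    ∀ x ∈ K, ¬ MildInteriorPt hN r L K x →
      ∃ Φ, MildChartAt hN r L K x Φ ∧ MildChartBdry hN r K x Φ

/-- The boundary of a mildly Lipschitz hypersurface. -/
def mildBoundary (hN : 2 ≤ N) (r L : ℝ) (K : Set (Euc N)) : Set (Euc N) :=
  {x ∈ K | ¬ MildInteriorPt hN r L K x}

/-- The boundary of a Lipschitz hypersurface. -/
def lipBoundary (hN : 2 ≤ N) (r L : ℝ) (K : Set (Euc N)) : Set (Euc N) :=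
  {x ∈ K | ¬ LipInteriorPt hN r L K x}

/-! ### The classes `B̃`, `C̃`, `B̃₁`, `C̃₁` -/

/-- The class `B̃(r, L, Ω, ω)`: finite ω-separated unions of mildly Lipschitz
hypersurfaces. -/
def InTildeB (hN : 2 ≤ N) (r L : ℝ) (Ω : Set (Euc N)) (ω : ℝ → ℝ) (K : Set (Euc N)) :
    Prop :=
  ∃ (M : ℕ) (Ki : Fin M → Set (Euc N)), 0 < M ∧
    (∀ i, IsMildLipHyp hN r L (Ki i) ∧ Ki i ⊆ closure Ω) ∧
    K = ⋃ i, Ki i ∧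
    ∀ i, ∀ x ∈ Ki i, ∀ t, 0 < t →
      (∀ z ∈ mildBoundary hN r L (Ki i), t ≤ dist x z) →
      ω t ≤ infDist x (⋃ (j) (_ : j ≠ i), Ki j)

/-- The class `C̃(r, L, Ω, ω)`: finite ω-separated unions of Lipschitz hypersurfaces. -/
def InTildeC (hN : 2 ≤ N) (r L : ℝ) (Ω : Set (Euc N)) (ω : ℝ → ℝ) (K : Set (Euc N)) :
    Prop :=
  ∃ (M : ℕ) (Ki : Fin M → Set (Euc N)), 0 < M ∧
    (∀ i, IsLipHyp hN r L (Ki i) ∧ Ki i ⊆ closure Ω) ∧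
    K = ⋃ i, Ki i ∧
    ∀ i, ∀ x ∈ Ki i, ∀ t, 0 < t →
      (∀ z ∈ lipBoundary hN r L (Ki i), t ≤ dist x z) →
      ω t ≤ infDist x (⋃ (j) (_ : j ≠ i), Ki j)

/-- The class `B̃₁(r, L, Ω, ω)`: compact sets with boundary in `B̃(r, L, Ω, ω)`. -/
def InTildeB1 (hN : 2 ≤ N) (r L : ℝ) (Ω : Set (Euc N)) (ω : ℝ → ℝ) (S : Set (Euc N)) :
    Prop :=
  IsCompact S ∧ S ⊆ closure Ω ∧ InTildeB hN r L Ω ω (frontier S)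

/-- The class `C̃₁(r, L, Ω, ω)`: compact sets with boundary in `C̃(r, L, Ω, ω)`. -/
def InTildeC1 (hN : 2 ≤ N) (r L : ℝ) (Ω : Set (Euc N)) (ω : ℝ → ℝ) (S : Set (Euc N)) :
    Prop :=
  IsCompact S ∧ S ⊆ closure Ω ∧ InTildeC hN r L Ω ω (frontier S)

/-! ### The classes `B̂`, `Ĉ` and the scatterer class -/

/-- The open cube `Q = (-1,1)^{N-1} × (0,1)`. -/
def QSet (N : ℕ) (hN : 2 ≤ N) : Set (Euc N) :=
  {y | (∀ i : Fin N, (i : ℕ) < N - 1 → |y i| < 1) ∧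
       0 < y (idxLast N (by omega)) ∧ y (idxLast N (by omega)) < 1}

/-- The face `Γ = [-1,1]^{N-1} × {0}` of the cube `Q`. -/
def GammaSet (N : ℕ) (hN : 2 ≤ N) : Set (Euc N) :=
  {y | (∀ i : Fin N, (i : ℕ) < N - 1 → |y i| ≤ 1) ∧ y (idxLast N (by omega)) = 0}

/-- `f` has local Lipschitz constant (essential sup of the Jacobian, `W^{1,∞}` bound) at
most `C` on `D`. -/
def LocLipOn (C : ℝ) (f : Euc N → Euc N) (D : Set (Euc N)) : Prop :=
  ∀ x ∈ D, ∃ ε, 0 < ε ∧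
    ∀ y ∈ ball x ε ∩ D, ∀ z ∈ ball x ε ∩ D, ‖f y - f z‖ ≤ C * ‖y - z‖

/-- Condition ii) of the definition of the classes `B̂` and `Ĉ`: local bi-`W^{1,∞}` charts
with constant `Ct` flattening the boundary of each connected component of
`(ℝ^N \ S) ∩ B_{r₁}(x)` whose boundary contains `x ∈ ∂S`. -/
def BoundaryChartCond (hN : 2 ≤ N) (r₁ Ct : ℝ) (ω : ℝ → ℝ) (S : Set (Euc N)) : Prop :=
  ∀ x ∈ frontier S, ∀ y₀ ∈ Sᶜ ∩ ball x r₁,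
    x ∈ frontier (connectedComponentIn (Sᶜ ∩ ball x r₁) y₀) →
    ∃ (U' : Set (Euc N)) (T Tinv : Euc N → Euc N),
      connectedComponentIn (Sᶜ ∩ ball x r₁) y₀ ⊆ U' ∧ U' ⊆ Sᶜ ∧ IsOpen U' ∧
      Set.BijOn T (QSet N hN) U' ∧ LocLipOn Ct T (QSet N hN) ∧
      Set.BijOn Tinv U' (QSet N hN) ∧ (∀ z ∈ QSet N hN, Tinv (T z) = z) ∧
      LocLipOn Ct Tinv U' ∧
      (∀ p ∈ closure (QSet N hN), ∀ q ∈ closure (QSet N hN),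
        ‖T p - T q‖ ≤ Ct * ‖p - q‖) ∧
      T 0 = x ∧
      frontier (connectedComponentIn (Sᶜ ∩ ball x r₁) y₀) ∩ ball x r₁ ⊆ T '' GammaSet N hN ∧
      T '' GammaSet N hN ⊆ frontier S ∧
      ∀ s, 0 < s → s < r₁ →
        ∀ y ∈ connectedComponentIn (Sᶜ ∩ ball x r₁) y₀ ∩ ball x (r₁ - s),
          ω s ≤ infDist (Tinv y) (frontier (QSet N hN) \ GammaSet N hN)

/-- The class `B̂(r, L, Ω, r₁, Ct, ω)`. -/
def InHatB (hN : 2 ≤ N) (r L r₁ Ct : ℝ) (Ω : Set (Euc N)) (ω : ℝ → ℝ)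
    (S : Set (Euc N)) : Prop :=
  IsCompact S ∧ S ⊆ closure Ω ∧ InTildeB hN r L Ω ω (frontier S) ∧
    BoundaryChartCond hN r₁ Ct ω S

/-- The class `Ĉ(r, L, Ω, r₁, Ct, ω)`. -/
def InHatC (hN : 2 ≤ N) (r L r₁ Ct : ℝ) (Ω : Set (Euc N)) (ω : ℝ → ℝ)
    (S : Set (Euc N)) : Prop :=
  IsCompact S ∧ S ⊆ closure Ω ∧ InTildeC hN r L Ω ω (frontier S) ∧
    BoundaryChartCond hN r₁ Ct ω S

/-- The class of admissible scatterers `B̂_scat(r, L, R, r₁, Ct, ω, δ)`. -/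
def InScatClass (hN : 2 ≤ N) (r L R r₁ Ct : ℝ) (ω δfn : ℝ → ℝ) (S : Set (Euc N)) : Prop :=
  InHatB hN r L r₁ Ct (ball (0 : Euc N) R) ω S ∧
    IsConnected (Sᶜ : Set (Euc N)) ∧ UnifExtConn S δfn

/-! ### Lipschitz open sets, obstacles and polyhedral scatterers -/

/-- An open set `D ⊆ ℝ^m` is Lipschitz with constants `r` and `L`: at every boundary point
it is, in suitable coordinates, the subgraph of an `L`-Lipschitz function. -/
def IsLipOpen (m : ℕ) (hm : 1 ≤ m) (r L : ℝ) (D : Set (Euc m)) : Prop :=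
  IsOpen D ∧ ∀ x ∈ frontier D,
    ∃ (b : OrthonormalBasis (Fin m) ℝ (Euc m)) (φ : Euc (m - 1) → ℝ),
      φ 0 = 0 ∧ LipschitzWith (Real.toNNReal L) φ ∧
        ∀ y ∈ ball x r, (y ∈ D ↔ gcoord b x y (idxLast m hm) < φ (initCoords b x y))

/-- `S` is a polyhedral scatterer with constants `h` and `L`: its boundary is a finite union
of pairwise internally disjoint cells, each cell being (an isometric copy of) the closure of
a bounded Lipschitz domain with constants `h` and `L` contained in an `(N-1)`-dimensional
hyperplane. -/
def IsPolyhedral (hN : 2 ≤ N) (h L : ℝ) (S : Set (Euc N)) : Prop :=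
  ∃ (M : ℕ) (f : Fin M → (Euc (N - 1) →ᵃⁱ[ℝ] Euc N)) (D : Fin M → Set (Euc (N - 1))),
    (∀ i, IsLipOpen (N - 1) (by omega) h L (D i) ∧ Bornology.IsBounded (D i) ∧
      (D i).Nonempty) ∧
    frontier S = ⋃ i, (f i) '' closure (D i) ∧
    ∀ i j, i ≠ j → ((f i) '' D i) ∩ ((f j) '' D j) = ∅

/-- `S` is a polyhedral scatterer (no quantitative constants): its boundary is a finite union
of cells, each cell being the closure of a nonempty bounded open subset of a hyperplane. -/
def IsPolyhedralGen (hN : 2 ≤ N) (S : Set (Euc N)) : Prop :=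
  ∃ (M : ℕ) (f : Fin M → (Euc (N - 1) →ᵃⁱ[ℝ] Euc N)) (D : Fin M → Set (Euc (N - 1))),
    (∀ i, IsOpen (D i) ∧ Bornology.IsBounded (D i) ∧ (D i).Nonempty) ∧
    frontier S = ⋃ i, (f i) '' closure (D i)

/-- The class of admissible obstacles `D̂_obst(r, L, R)`. -/
def InObstClass (hN : 2 ≤ N) (r L R : ℝ) (S : Set (Euc N)) : Prop :=
  IsCompact S ∧ S ⊆ closedBall (0 : Euc N) R ∧ IsConnected (Sᶜ : Set (Euc N)) ∧
    ∃ D : Set (Euc N), D ⊆ ball (0 : Euc N) R ∧ IsLipOpen N (by omega) r L D ∧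
      frontier S = frontier D

/-! ### Scattering -/

/-- The Laplacian of `u` on the set `s`, computed with iterated derivatives within `s`. -/
def eucLapWithin (u : Euc N → ℂ) (s : Set (Euc N)) (x : Euc N) : ℂ :=
  ∑ i : Fin N, iteratedFDerivWithin ℝ 2 u s x
    ![EuclideanSpace.single i 1, EuclideanSpace.single i 1]

/-- `u` solves the Helmholtz equation `Δu + k²u = 0` on `s`. -/
def HelmholtzOn (k : ℝ) (u : Euc N → ℂ) (s : Set (Euc N)) : Prop :=
  ContDiffOn ℝ 2 u s ∧ ∀ x ∈ s, eucLapWithin u s x + (k : ℂ) ^ 2 * u x = 0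

/-- The incident plane wave `u^i(x) = exp(i k x·v)`. -/
def planeWave (k : ℝ) (v x : Euc N) : ℂ := Complex.exp (Complex.I * (k : ℂ) * ((⟪x, v⟫ : ℝ) : ℂ))

/-- The Sommerfeld radiation condition for the scattered field `us`, uniformly over all
directions. -/
def Sommerfeld (k : ℝ) (us : Euc N → ℂ) : Prop :=
  ∀ ε, 0 < ε → ∃ R₀ : ℝ, ∀ x : Euc N, R₀ ≤ ‖x‖ →
    ‖x‖ ^ (((N : ℝ) - 1) / 2) *
      ‖fderiv ℝ us x (‖x‖⁻¹ • x) - Complex.I * (k : ℂ) * us x‖ ≤ ε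

/-- `u` is the total field of the sound-hard exterior scattering problem for the scatterer
`S`, wavenumber `k` and incident direction `v`: it solves the Helmholtz equation outside
`S`, the scattered field `u - u^i` is radiating, and the homogeneous Neumann condition on
`∂S` holds in the weak (variational) sense. -/
def IsSoundHardSoln (k : ℝ) (v : Euc N) (S : Set (Euc N)) (u : Euc N → ℂ) : Prop :=
  HelmholtzOn k u Sᶜ ∧ Sommerfeld k (fun x => u x - planeWave k v x) ∧
    ∀ φ : Euc N → ℝ, ContDiff ℝ (⊤ : ℕ∞) φ → HasCompactSupport φ →
      ∫ x in Sᶜ, (fderivWithin ℝ u Sᶜ x (gradient φ x) - (k : ℂ) ^ 2 * u x * ((φ x : ℝ) : ℂ)) = 0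

/-- `u` is the total field of the sound-soft exterior scattering problem for the scatterer
`S`, wavenumber `k` and incident direction `v`. -/
def IsSoundSoftSoln (k : ℝ) (v : Euc N) (S : Set (Euc N)) (u : Euc N → ℂ) : Prop :=
  HelmholtzOn k u Sᶜ ∧ Sommerfeld k (fun x => u x - planeWave k v x) ∧
    ContinuousOn u (closure (Sᶜ : Set (Euc N))) ∧ ∀ x ∈ frontier S, u x = 0

/-- The set `I_N` of admissible wavenumbers. -/
def INset (N : ℕ) (kmin kmax : ℝ) : Set ℝ := if N = 2 then Icc kmin kmax else Ioc 0 kmax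

/-! ### Regular chains and cones -/

/-- A regular chain of balls with respect to the open set `G` with constants
`0 < a₁ < a₂ < a₃ < 1 < a₄`. -/
def RegChain (G : Set (Euc N)) (a₁ a₂ a₃ a₄ : ℝ) (n : ℕ) (z : ℕ → Euc N) (ρ : ℕ → ℝ) :
    Prop :=
  (∀ i ≤ n, 0 < ρ i) ∧
  (∀ i ≤ n, ball (z i) (a₄ * ρ i) ⊆ G) ∧
  (∀ i, i + 1 ≤ n → ρ (i + 1) ≤ ρ i ∧
    ball (z (i + 1)) (a₁ * ρ (i + 1)) ⊆ ball (z i) (a₂ * ρ i)) ∧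
  (∀ i, i + 1 ≤ n → ball (z i) (a₁ * ρ i) ⊆ ball (z (i + 1)) (a₃ * ρ (i + 1)))

/-- The open cone with vertex `x`, bisecting vector `v`, radius `r` and amplitude `θ`. -/
def openCone (x v : Euc N) (r θ : ℝ) : Set (Euc N) :=
  {y | 0 < ‖y - x‖ ∧ ‖y - x‖ < r ∧
    Real.cos θ < ⟪(‖y - x‖)⁻¹ • (y - x), v⟫ ∧ ⟪(‖y - x‖)⁻¹ • (y - x), v⟫ ≤ 1}

/-! ### Quantities for the stability estimates -/

/-- The distance `d` of \eqref{ddefin} between two scatterers. -/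
def dGap (S S' : Set (Euc N)) : ℝ :=
  max (sSup ((fun x => infDist x (frontier S')) '' (frontier S \ S')))
      (sSup ((fun x => infDist x (frontier S)) '' (frontier S' \ S)))

/-- The modulus of continuity `η(s) = exp(−(log(−log s))^{1/2})`. -/
def etaFn (s : ℝ) : ℝ := Real.exp (-Real.sqrt (Real.log (-Real.log s)))

/-- The inverse of `η`, `η⁻¹(y) = exp(−exp((log y)²))`. -/
def etaInvFn (y : ℝ) : ℝ := Real.exp (-Real.exp ((Real.log y) ^ 2))

/-! ### Symmetry -/

/-- The centre of mass of a set. -/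
def centerOfMass (S : Set (Euc N)) : Euc N :=
  (MeasureTheory.volume S).toReal⁻¹ • ∫ x in S, x

/-- Reflection across the affine hyperplane through `p` with unit normal `ν`. -/
def reflAcross (p ν : Euc N) (y : Euc N) : Euc N := y - (2 * ⟪y - p, ν⟫) • ν

/-- The affine hyperplane through `p` with normal `ν`. -/
def planeSet (p ν : Euc N) : Set (Euc N) := {y | ⟪y - p, ν⟫ = 0}

/-- The hyperplane `Π̃(S) = span{v₁, …, v_{N-1}} + P(S)` through the centre of mass of
`S`. -/
def tildePlane (v : Fin (N - 1) → Euc N) (S : Set (Euc N)) : Set (Euc N) :=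
  {y | y - centerOfMass S ∈ Submodule.span ℝ (Set.range v)}

/-- The planes with normal orthogonal to `v` with respect to which `S` is symmetric. -/
def symPlanes (v : Euc N) (S : Set (Euc N)) : Set (Set (Euc N)) :=
  {P | ∃ p ν : Euc N, ‖ν‖ = 1 ∧ ⟪ν, v⟫ = 0 ∧ P = planeSet p ν ∧ reflAcross p ν '' S = S}

end Scat

section ChainAux

variable {N : ℕ}

lemma locLip_continuousOn {C : ℝ} {f : Euc N → Euc N} {D : Set (Euc N)}
    (hC : 0 ≤ C) (hf : Scat.LocLipOn C f D) : ContinuousOn f D := by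
  intro x hx
  obtain ⟨ε, hε, hlip⟩ := hf x hx
  rw [Metric.continuousWithinAt_iff]
  intro δ hδ
  refine ⟨min ε (δ / (C + 1)), by positivity, fun {y} hy hyd => ?_⟩
  have h1 : y ∈ ball x ε ∩ D :=
    ⟨by rw [mem_ball]; exact lt_of_lt_of_le hyd (min_le_left _ _), hy⟩
  have h2 : x ∈ ball x ε ∩ D := ⟨mem_ball_self hε, hx⟩
  have hyd' : ‖y - x‖ ≤ δ / (C + 1) := by
    rw [← dist_eq_norm]; exact le_of_lt (lt_of_lt_of_le hyd (min_le_right _ _))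
  have hstep := hlip y h1 x h2
  rw [dist_eq_norm]
  have h3 : C * ‖y - x‖ ≤ C * (δ / (C + 1)) := mul_le_mul_of_nonneg_left hyd' hC
  have h4 : C * (δ / (C + 1)) < δ := by
    rw [mul_div_assoc'] at *
    rw [div_lt_iff₀ (by linarith : (0:ℝ) < C + 1)]
    nlinarith
  linarith [hstep]

lemma lipOn_of_locLip {C : ℝ} {f : Euc N → Euc N} {D s : Set (Euc N)}
    (hC : 0 ≤ C) (hf : Scat.LocLipOn C f D) (hsD : s ⊆ D) (hconv : Convex ℝ s) :
    ∀ x ∈ s, ∀ y ∈ s, ‖f y - f x‖ ≤ C * ‖y - x‖ := by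
  intro x hx y hy
  rcases eq_or_ne y x with rfl | hne
  · simp
  have hd : 0 < ‖y - x‖ := by rwa [norm_pos_iff, sub_ne_zero]
  set γ : ℝ → Euc N := fun t => x + t • (y - x) with hγdef
  have hγnorm : ∀ s' t : ℝ, ‖γ s' - γ t‖ = |s' - t| * ‖y - x‖ := by
    intro s' t
    have : γ s' - γ t = (s' - t) • (y - x) := by
      simp only [hγdef]; rw [add_sub_add_left_eq_sub, ← sub_smul]
    rw [this, norm_smul, Real.norm_eq_abs]
  have hγmem : ∀ t, t ∈ Icc (0:ℝ) 1 → γ t ∈ s := by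
    intro t ht
    have h := hconv hx hy (by linarith [ht.2] : (0:ℝ) ≤ 1 - t) ht.1 (by ring)
    have he : (1 - t) • x + t • y = γ t := by
      simp only [hγdef]; rw [smul_sub, sub_smul, one_smul]; abel
    rwa [he] at h
  set A : Set ℝ := {t | t ∈ Icc (0:ℝ) 1 ∧ ‖f (γ t) - f x‖ ≤ C * t * ‖y - x‖} with hA
  have h0A : (0:ℝ) ∈ A := by
    refine ⟨⟨le_refl 0, zero_le_one⟩, ?_⟩
    have : γ 0 = x := by simp [hγdef]
    simp [this]
  have hbdd : BddAbove A := ⟨1, fun t ht => ht.1.2⟩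
  have hne' : A.Nonempty := ⟨0, h0A⟩
  set t₀ := sSup A with ht₀
  have ht₀mem : t₀ ∈ Icc (0:ℝ) 1 := ⟨le_csSup hbdd h0A, csSup_le hne' fun t ht => ht.1.2⟩
  obtain ⟨ε, hε, hlip⟩ := hf (γ t₀) (hsD (hγmem t₀ ht₀mem))
  have hmem2 : γ t₀ ∈ ball (γ t₀) ε ∩ D := ⟨mem_ball_self hε, hsD (hγmem _ ht₀mem)⟩
  have key : t₀ ∈ A := by
    obtain ⟨t, htA, htlt⟩ := exists_lt_of_lt_csSup hne'
      (show t₀ - ε / ‖y - x‖ < t₀ by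
        have : 0 < ε / ‖y - x‖ := div_pos hε hd
        linarith)
    have htle : t ≤ t₀ := le_csSup hbdd htA
    have hdist : ‖γ t - γ t₀‖ < ε := by
      rw [hγnorm, abs_of_nonpos (by linarith), neg_sub, ← lt_div_iff₀ hd]
      linarith
    have hmem1 : γ t ∈ ball (γ t₀) ε ∩ D :=
      ⟨by rw [mem_ball, dist_eq_norm]; exact hdist, hsD (hγmem _ htA.1)⟩
    refine ⟨ht₀mem, ?_⟩
    have hstep := hlip (γ t₀) hmem2 (γ t) hmem1
    have h1 : ‖f (γ t₀) - f (γ t)‖ ≤ C * ((t₀ - t) * ‖y - x‖) := by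
      rw [hγnorm, abs_of_nonneg (by linarith)] at hstep
      linarith [hstep]
    have tri : ‖f (γ t₀) - f x‖ ≤ ‖f (γ t₀) - f (γ t)‖ + ‖f (γ t) - f x‖ := by
      have := norm_add_le (f (γ t₀) - f (γ t)) (f (γ t) - f x)
      rwa [sub_add_sub_cancel] at this
    have h2 := htA.2
    nlinarith
  have ht₀1 : t₀ = 1 := by
    by_contra hcon
    have hlt : t₀ < 1 := lt_of_le_of_ne ht₀mem.2 hcon
    set t := min 1 (t₀ + ε / (2 * ‖y - x‖)) with htdef
    have hpos : 0 < ε / (2 * ‖y - x‖) := div_pos hε (by positivity)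
    have htgt : t₀ < t := lt_min hlt (by linarith)
    have ht1 : t ≤ 1 := min_le_left _ _
    have ht0 : 0 ≤ t := le_trans ht₀mem.1 htgt.le
    have hdiff : (t - t₀) * ‖y - x‖ < ε := by
      have h' : t - t₀ ≤ ε / (2 * ‖y - x‖) := by
        have := min_le_right 1 (t₀ + ε / (2 * ‖y - x‖)); linarith
      have : (t - t₀) * ‖y - x‖ ≤ ε / (2 * ‖y - x‖) * ‖y - x‖ :=
        mul_le_mul_of_nonneg_right h' (norm_nonneg _)
      have he : ε / (2 * ‖y - x‖) * ‖y - x‖ = ε / 2 := by field_simp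
      rw [he] at this
      linarith
    have hdist : ‖γ t - γ t₀‖ < ε := by
      rw [hγnorm, abs_of_nonneg (by linarith)]; exact hdiff
    have hmem1 : γ t ∈ ball (γ t₀) ε ∩ D :=
      ⟨by rw [mem_ball, dist_eq_norm]; exact hdist, hsD (hγmem _ ⟨ht0, ht1⟩)⟩
    have hstep := hlip (γ t) hmem1 (γ t₀) hmem2
    have h1 : ‖f (γ t) - f (γ t₀)‖ ≤ C * ((t - t₀) * ‖y - x‖) := by
      rw [hγnorm, abs_of_nonneg (by linarith)] at hstep
      linarith [hstep]
    have tri : ‖f (γ t) - f x‖ ≤ ‖f (γ t) - f (γ t₀)‖ + ‖f (γ t₀) - f x‖ := by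
      have := norm_add_le (f (γ t) - f (γ t₀)) (f (γ t₀) - f x)
      rwa [sub_add_sub_cancel] at this
    have htA : t ∈ A := ⟨⟨ht0, ht1⟩, by nlinarith [key.2]⟩
    have := le_csSup hbdd htA
    linarith
  have hγ1 : γ 1 = y := by simp [hγdef]
  have := key.2
  rw [ht₀1, hγ1] at this
  linarith [this]

lemma ball_subset_image {Ct : ℝ} (hCt : 0 < Ct) {T S : Euc N → Euc N}
    {U₁ Ut : Set (Euc N)} (hU₁ : IsOpen U₁)
    (hT : Set.BijOn T U₁ Ut) (hS : Set.BijOn S Ut U₁)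
    (hinv : ∀ x ∈ U₁, S (T x) = x)
    (hTlip : Scat.LocLipOn Ct T U₁) (hSlip : Scat.LocLipOn Ct S Ut)
    {z : Euc N} {r : ℝ} (hball : ball z r ⊆ Ut) :
    ball (S z) (r / Ct) ⊆ S '' ball z r := by
  have hinv2 : ∀ w ∈ Ut, T (S w) = w := by
    intro w hw
    have h1 : S w ∈ U₁ := hS.mapsTo hw
    exact hS.injOn (hT.mapsTo h1) hw (hinv _ h1)
  intro y hy
  have hyn : ‖y - S z‖ < r / Ct := by rw [mem_ball, dist_eq_norm] at hy; exact hy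
  have hrCt : 0 < r / Ct := lt_of_le_of_lt (norm_nonneg _) hyn
  have hr : 0 < r := by
    have := mul_pos hrCt hCt
    rwa [div_mul_cancel₀ _ hCt.ne'] at this
  rcases eq_or_ne (y - S z) 0 with h0 | hne0
  · exact ⟨z, mem_ball_self hr, by rw [sub_eq_zero] at h0; exact h0.symm⟩
  have hd : 0 < ‖y - S z‖ := norm_pos_iff.mpr hne0
  set d : Euc N := y - S z with hddef
  set γ : ℝ → Euc N := fun t => S z + t • d with hγdef
  have hγnorm : ∀ s' t : ℝ, ‖γ s' - γ t‖ = |s' - t| * ‖d‖ := by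
    intro s' t
    have : γ s' - γ t = (s' - t) • d := by
      simp only [hγdef]; rw [add_sub_add_left_eq_sub, ← sub_smul]
    rw [this, norm_smul, Real.norm_eq_abs]
  have hγcont : Continuous γ := by
    simp only [hγdef]; fun_prop
  set A : Set ℝ :=
    {t | t ∈ Icc (0:ℝ) 1 ∧ ∃ w, ‖w - z‖ ≤ Ct * t * ‖d‖ ∧ S w = γ t} with hA
  have h0A : (0:ℝ) ∈ A := by
    refine ⟨⟨le_refl 0, zero_le_one⟩, z, by simp, by simp [hγdef]⟩
  have hbdd : BddAbove A := ⟨1, fun t ht => ht.1.2⟩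
  have hne' : A.Nonempty := ⟨0, h0A⟩
  set t₀ := sSup A with ht₀def
  have ht₀mem : t₀ ∈ Icc (0:ℝ) 1 := ⟨le_csSup hbdd h0A, csSup_le hne' fun t ht => ht.1.2⟩
  have hCtd : Ct * ‖d‖ < r := by
    have h1 : Ct * ‖d‖ < Ct * (r / Ct) := mul_lt_mul_of_pos_left hyn hCt
    have h2 : Ct * (r / Ct) = r := by field_simp
    linarith
  have hRr : Ct * t₀ * ‖d‖ < r := by
    nlinarith [mul_nonneg (mul_nonneg hCt.le (sub_nonneg.mpr ht₀mem.2)) (norm_nonneg d)]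
  have hKUt : closedBall z (Ct * t₀ * ‖d‖) ⊆ Ut :=
    (closedBall_subset_ball hRr).trans hball
  have hScont : ContinuousOn S (closedBall z (Ct * t₀ * ‖d‖)) :=
    (locLip_continuousOn hCt.le hSlip).mono hKUt
  have hKcomp : IsCompact (S '' closedBall z (Ct * t₀ * ‖d‖)) :=
    (isCompact_closedBall z _).image_of_continuousOn hScont
  have hsubim : γ '' A ⊆ S '' closedBall z (Ct * t₀ * ‖d‖) := by
    rintro _ ⟨t, htA, rfl⟩
    obtain ⟨w, hw1, hw2⟩ := htA.2
    have htle : t ≤ t₀ := le_csSup hbdd htA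
    refine ⟨w, ?_, hw2⟩
    rw [mem_closedBall, dist_eq_norm]
    refine hw1.trans ?_
    have : Ct * t ≤ Ct * t₀ := mul_le_mul_of_nonneg_left htle hCt.le
    exact mul_le_mul_of_nonneg_right this (norm_nonneg _)
  have ht₀img : γ t₀ ∈ S '' closedBall z (Ct * t₀ * ‖d‖) := by
    have ht₀cl : t₀ ∈ closure A := csSup_mem_closure hne' hbdd
    have h1 : γ t₀ ∈ closure (γ '' A) :=
      hγcont.continuousWithinAt.mem_closure_image ht₀cl
    exact hKcomp.isClosed.closure_subset ((closure_mono hsubim) h1)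
  obtain ⟨w₀, hw₀K, hw₀⟩ := ht₀img
  have hw₀n : ‖w₀ - z‖ ≤ Ct * t₀ * ‖d‖ := by
    rw [mem_closedBall, dist_eq_norm] at hw₀K; exact hw₀K
  have ht₀1 : t₀ = 1 := by
    by_contra hcon
    have hlt : t₀ < 1 := lt_of_le_of_ne ht₀mem.2 hcon
    have hw₀Ut : w₀ ∈ Ut := hball (by
      rw [mem_ball, dist_eq_norm]; exact lt_of_le_of_lt hw₀n hRr)
    have hγU : γ t₀ ∈ U₁ := hw₀ ▸ hS.mapsTo hw₀Ut
    have hTw : T (γ t₀) = w₀ := by rw [← hw₀]; exact hinv2 w₀ hw₀Ut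
    obtain ⟨ε, hε, hlip⟩ := hTlip (γ t₀) hγU
    obtain ⟨δ₀, hδ₀, hδball⟩ := Metric.isOpen_iff.mp hU₁ (γ t₀) hγU
    set η := min ε δ₀ with hηdef
    have hη : 0 < η := lt_min hε hδ₀
    set t := min 1 (t₀ + η / (2 * ‖d‖)) with htdef
    have hpos : 0 < η / (2 * ‖d‖) := div_pos hη (by positivity)
    have htgt : t₀ < t := lt_min hlt (by linarith)
    have ht1 : t ≤ 1 := min_le_left _ _
    have ht0 : 0 ≤ t := le_trans ht₀mem.1 htgt.le
    have hdiff : (t - t₀) * ‖d‖ < η := by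
      have h' : t - t₀ ≤ η / (2 * ‖d‖) := by
        have := min_le_right 1 (t₀ + η / (2 * ‖d‖)); linarith
      have h'' : (t - t₀) * ‖d‖ ≤ η / (2 * ‖d‖) * ‖d‖ :=
        mul_le_mul_of_nonneg_right h' (norm_nonneg _)
      have he : η / (2 * ‖d‖) * ‖d‖ = η / 2 := by field_simp
      rw [he] at h''
      linarith
    have hγdist : ‖γ t - γ t₀‖ < η := by
      rw [hγnorm, abs_of_nonneg (by linarith)]; exact hdiff
    have hγtU : γ t ∈ U₁ := hδball (by
      rw [mem_ball, dist_eq_norm]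
      exact lt_of_lt_of_le hγdist (min_le_right _ _))
    have hm1 : γ t ∈ ball (γ t₀) ε ∩ U₁ :=
      ⟨by rw [mem_ball, dist_eq_norm]; exact lt_of_lt_of_le hγdist (min_le_left _ _), hγtU⟩
    have hm2 : γ t₀ ∈ ball (γ t₀) ε ∩ U₁ := ⟨mem_ball_self hε, hγU⟩
    have hTt : ‖T (γ t) - w₀‖ ≤ Ct * ((t - t₀) * ‖d‖) := by
      have hstep := hlip (γ t) hm1 (γ t₀) hm2
      rw [hTw] at hstep
      rw [hγnorm, abs_of_nonneg (by linarith)] at hstep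
      linarith [hstep]
    have hwn : ‖T (γ t) - z‖ ≤ Ct * t * ‖d‖ := by
      have tri : ‖T (γ t) - z‖ ≤ ‖T (γ t) - w₀‖ + ‖w₀ - z‖ := by
        have := norm_add_le (T (γ t) - w₀) (w₀ - z)
        rwa [sub_add_sub_cancel] at this
      nlinarith
    have htA : t ∈ A := ⟨⟨ht0, ht1⟩, T (γ t), hwn, hinv _ hγtU⟩
    have := le_csSup hbdd htA
    linarith
  rw [ht₀1] at hw₀ hw₀n
  have hγ1 : γ 1 = y := by simp [hγdef, hddef]
  refine ⟨w₀, ?_, by rw [hw₀, hγ1]⟩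
  rw [mem_ball, dist_eq_norm]
  calc ‖w₀ - z‖ ≤ Ct * 1 * ‖d‖ := hw₀n
    _ < r := by rw [mul_one]; exact hCtd

end ChainAux
/-- **Lemma.** The image, under the inverse of a bi-`W^{1,∞}` mapping `T : U₁ → Ũ₁` with
constant `C̃`, of a regular chain of balls with respect to `Ũ₁`, with radii divided by `C̃`,
is a regular chain with respect to `U₁` for suitable constants. -/
theorem stmt_9 (N : ℕ) (U₁ Ut : Set (Euc N)) (hU₁ : IsOpen U₁) (hUt : IsOpen Ut)
    (Ct : ℝ) (hCt : 0 < Ct) (T S : Euc N → Euc N)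
    (hT : Set.BijOn T U₁ Ut) (hS : Set.BijOn S Ut U₁)
    (hinv : ∀ x ∈ U₁, S (T x) = x)
    (hTlip : Scat.LocLipOn Ct T U₁) (hSlip : Scat.LocLipOn Ct S Ut)
    (at₁ at₂ at₃ at₄ a₁ a₂ a₃ a₄ : ℝ)
    (h1 : 0 < at₁) (h2 : at₁ < at₂) (h3 : at₂ < at₃) (h4 : at₃ < 1) (h5 : 1 < at₄)
    (ha1 : a₁ = at₁) (ha4 : a₄ = at₄)
    (hc1 : a₁ < Ct ^ 2 * at₂) (hc2 : Ct ^ 2 * at₂ ≤ a₂) (hc3 : a₂ < a₃) (hc4 : a₃ < 1)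
    (hc5 : a₁ < Ct ^ 2 * at₃) (hc6 : Ct ^ 2 * at₃ ≤ a₃)
    (n : ℕ) (zt : ℕ → Euc N) (ρt : ℕ → ℝ)
    (hchain : Scat.RegChain Ut at₁ at₂ at₃ at₄ n zt ρt) :
    Scat.RegChain U₁ a₁ a₂ a₃ a₄ n (fun i => S (zt i)) (fun i => ρt i / Ct) := by
  obtain ⟨hρ, hsub, h12, h21⟩ := hchain
  have hBall : ∀ i ≤ n, ∀ c : ℝ, c ≤ at₄ → ball (zt i) (c * ρt i) ⊆ Ut := by
    intro i hi c hc
    refine (ball_subset_ball ?_).trans (hsub i hi)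
    nlinarith [hρ i hi]
  have hSlipOn : ∀ i ≤ n, ∀ c : ℝ, 0 < c → c ≤ at₄ → ∀ w ∈ ball (zt i) (c * ρt i),
      ‖S w - S (zt i)‖ ≤ Ct * ‖w - zt i‖ := by
    intro i hi c hc0 hc w hw
    exact lipOn_of_locLip hCt.le hSlip (hBall i hi c hc) (convex_ball _ _)
      (zt i) (mem_ball_self (mul_pos hc0 (hρ i hi))) w hw
  have hImg : ∀ i ≤ n, ∀ c : ℝ, 0 < c → c ≤ at₄ →
      ball (S (zt i)) (c * ρt i / Ct) ⊆ S '' ball (zt i) (c * ρt i) := by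
    intro i hi c hc0 hc
    exact ball_subset_image hCt hU₁ hT hS hinv hTlip hSlip (hBall i hi c hc)
  refine ⟨fun i hi => div_pos (hρ i hi) hCt, fun i hi => ?_, fun i hi => ⟨?_, ?_⟩,
    fun i hi => ?_⟩
  · -- ball (S (zt i)) (a₄ * (ρt i / Ct)) ⊆ U₁
    have he : a₄ * (ρt i / Ct) = at₄ * ρt i / Ct := by rw [ha4]; ring
    intro y hy
    have hy' : y ∈ ball (S (zt i)) (at₄ * ρt i / Ct) := by rwa [← he]
    obtain ⟨w, hw, rfl⟩ := hImg i hi at₄ (by linarith) le_rfl hy'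
    exact hS.mapsTo (hBall i hi at₄ le_rfl hw)
  · -- radii nonincreasing
    have := (h12 i hi).1
    show ρt (i + 1) / Ct ≤ ρt i / Ct
    gcongr
  · -- ball (S (zt (i+1))) (a₁ * ρ(i+1)) ⊆ ball (S (zt i)) (a₂ * ρ i)
    intro y hy
    have hρi : 0 < ρt i := hρ i (by omega)
    have he : a₁ * (ρt (i + 1) / Ct) = at₁ * ρt (i + 1) / Ct := by rw [ha1]; ring
    have hy' : y ∈ ball (S (zt (i + 1))) (at₁ * ρt (i + 1) / Ct) := by
      rw [← he]; exact hy
    obtain ⟨w, hw, rfl⟩ := hImg (i + 1) hi at₁ h1 (by linarith) hy'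
    have hw2 : w ∈ ball (zt i) (at₂ * ρt i) := (h12 i hi).2 hw
    have hwn : ‖w - zt i‖ < at₂ * ρt i := by
      rw [mem_ball, dist_eq_norm] at hw2; exact hw2
    have hlipb := hSlipOn i (by omega) at₂ (by linarith) (by linarith) w hw2
    show S w ∈ ball (S (zt i)) (a₂ * (ρt i / Ct))
    rw [mem_ball, dist_eq_norm]
    have hle : Ct * (at₂ * ρt i) ≤ a₂ * (ρt i / Ct) := by
      have h1' : Ct * (at₂ * ρt i) * Ct ≤ a₂ * (ρt i / Ct) * Ct := by
        have heq : a₂ * (ρt i / Ct) * Ct = a₂ * ρt i := by field_simp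
        rw [heq]
        nlinarith [mul_le_mul_of_nonneg_right hc2 hρi.le]
      exact le_of_mul_le_mul_right h1' hCt
    calc ‖S w - S (zt i)‖ ≤ Ct * ‖w - zt i‖ := hlipb
      _ < Ct * (at₂ * ρt i) := by nlinarith
      _ ≤ a₂ * (ρt i / Ct) := hle
  · -- ball (S (zt i)) (a₁ * ρ i) ⊆ ball (S (zt (i+1))) (a₃ * ρ(i+1))
    intro y hy
    have hρi1 : 0 < ρt (i + 1) := hρ (i + 1) hi
    have he : a₁ * (ρt i / Ct) = at₁ * ρt i / Ct := by rw [ha1]; ring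
    have hy' : y ∈ ball (S (zt i)) (at₁ * ρt i / Ct) := by rw [← he]; exact hy
    obtain ⟨w, hw, rfl⟩ := hImg i (by omega) at₁ h1 (by linarith) hy'
    have hw2 : w ∈ ball (zt (i + 1)) (at₃ * ρt (i + 1)) := h21 i hi hw
    have hwn : ‖w - zt (i + 1)‖ < at₃ * ρt (i + 1) := by
      rw [mem_ball, dist_eq_norm] at hw2; exact hw2
    have hlipb := hSlipOn (i + 1) hi at₃ (by linarith) (by linarith) w hw2
    show S w ∈ ball (S (zt (i + 1))) (a₃ * (ρt (i + 1) / Ct))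
    rw [mem_ball, dist_eq_norm]
    have hle : Ct * (at₃ * ρt (i + 1)) ≤ a₃ * (ρt (i + 1) / Ct) := by
      have h1' : Ct * (at₃ * ρt (i + 1)) * Ct ≤ a₃ * (ρt (i + 1) / Ct) * Ct := by
        have heq : a₃ * (ρt (i + 1) / Ct) * Ct = a₃ * ρt (i + 1) := by field_simp
        rw [heq]
        nlinarith [mul_le_mul_of_nonneg_right hc6 hρi1.le]
      exact le_of_mul_le_mul_right h1' hCt
    calc ‖S w - S (zt (i + 1))‖ ≤ Ct * ‖w - zt (i + 1)‖ := hlipb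
      _ < Ct * (at₃ * ρt (i + 1)) := by nlinarith
      _ ≤ a₃ * (ρt (i + 1) / Ct) := hle
end
end

section
/- Let 𝒞 be an open cone in ℝ^N with vertex at the origin, bisecting vector e_N, amplitude θ with 0 < θ < π/2, and radius r, i.e. 𝒞 = {y : 0 < ‖y‖ < r, cos θ < (y/‖y‖)·e_N ≤ 1}. Fix constants 0 < a₁ < a₂ < a₃ < 1 < a₄ and set c₁ = sin(θ)/a₄ ∈ (0,1). Given 0 < c₂ ≤ c₁, fix z₀ = (r/2)e_N and ρ₀ with c₂(r/2) ≤ ρ₀ ≤ c₁(r/2). Then, for any constant b with 0 < max{(1 − a₂c₂)/(1 − a₁c₂), (1 + a₁c₂)/(1 + a₃c₂)} ≤ b < 1, the balls B_{ρₙ}(zₙ) with zₙ = bⁿ(r/2)e_N and ρₙ = bⁿρ₀, n = 0,…,n̄ (for any n̄), form a regular chain with respect to 𝒞 with constants 0 < a₁ < a₂ < a₃ < 1 < a₄. -/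
open Metric Set MeasureTheory
open scoped RealInnerProductSpace ENNReal NNReal Topology

noncomputable section

set_option maxHeartbeats 2000000 in
/-- **Lemma.** In the open cone with vertex `0`, bisecting vector `e_N`, amplitude `θ` and
radius `r`, the balls `B_{ρ_n}(z_n)` with `z_n = bⁿ(r/2)e_N` and `ρ_n = bⁿρ₀` form a regular
chain with constants `0 < a₁ < a₂ < a₃ < 1 < a₄`, for every admissible ratio `b`. -/
theorem stmt_10 (N : ℕ) (hN : 1 ≤ N) (r θ : ℝ) (hr : 0 < r) (hθ : 0 < θ)
    (hθ' : θ < Real.pi / 2)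
    (a₁ a₂ a₃ a₄ : ℝ) (h1 : 0 < a₁) (h2 : a₁ < a₂) (h3 : a₂ < a₃) (h4 : a₃ < 1)
    (h5 : 1 < a₄)
    (c₂ ρ₀ b : ℝ) (hc₂ : 0 < c₂) (hc₂' : c₂ ≤ Real.sin θ / a₄)
    (hρ₀ : c₂ * (r / 2) ≤ ρ₀) (hρ₀' : ρ₀ ≤ (Real.sin θ / a₄) * (r / 2))
    (hb : max ((1 - a₂ * c₂) / (1 - a₁ * c₂)) ((1 + a₁ * c₂) / (1 + a₃ * c₂)) ≤ b)
    (hb' : b < 1) (n : ℕ) :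
    Scat.RegChain
      (Scat.openCone (0 : Euc N) (EuclideanSpace.single (Scat.idxLast N hN) (1 : ℝ)) r θ)
      a₁ a₂ a₃ a₄ n
      (fun m => (b ^ m * (r / 2)) • EuclideanSpace.single (Scat.idxLast N hN) (1 : ℝ))
      (fun m => b ^ m * ρ₀) := by
  set e : Euc N := EuclideanSpace.single (Scat.idxLast N hN) (1 : ℝ) with he_def
  have he : ‖e‖ = 1 := by simp [he_def]
  have hπ := Real.pi_pos
  have hsin : 0 < Real.sin θ := Real.sin_pos_of_pos_of_lt_pi hθ (by linarith)
  have hcos : 0 < Real.cos θ := Real.cos_pos_of_mem_Ioo ⟨by linarith, hθ'⟩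
  have hpyth := Real.sin_sq_add_cos_sq θ
  have hsin1 : Real.sin θ < 1 := by nlinarith
  have hb0 : 0 < b := by
    have h := le_trans (le_max_right _ _) hb
    have hd : 0 < 1 + a₃ * c₂ := by nlinarith
    have hnum : 0 < (1 + a₁ * c₂) / (1 + a₃ * c₂) := by positivity
    linarith
  have hρ0 : 0 < ρ₀ := lt_of_lt_of_le (by positivity) hρ₀
  have hc₂1 : c₂ < 1 := by
    have : Real.sin θ / a₄ < 1 := (div_lt_one (by linarith)).2 (by linarith)
    linarith
  have hdist : ∀ c d : ℝ, dist (c • e) (d • e) = |c - d| := by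
    intro c d
    rw [dist_eq_norm, ← sub_smul, norm_smul, he, mul_one, Real.norm_eq_abs]
  -- key scalar inequalities
  have hbL : 1 - a₂ * c₂ ≤ b * (1 - a₁ * c₂) := by
    have h1c : 0 < 1 - a₁ * c₂ := by nlinarith
    have h := le_trans (le_max_left _ _) hb
    exact (div_le_iff₀ h1c).mp h
  have hbR : 1 + a₁ * c₂ ≤ b * (1 + a₃ * c₂) := by
    have h1c : 0 < 1 + a₃ * c₂ := by nlinarith
    have h := le_trans (le_max_right _ _) hb
    exact (div_le_iff₀ h1c).mp h
  have hkey1 : 1 - b ≤ c₂ * (a₂ - a₁ * b) := by linarith [hbL, mul_comm b (a₁ * c₂)]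
  have hkey2 : 1 - b ≤ c₂ * (a₃ * b - a₁) := by linarith [hbR, mul_comm b (a₃ * c₂)]
  have ha3b : 0 < a₃ * b - a₁ := by nlinarith [hkey2]
  have hK1 : a₁ * b * ρ₀ + (r / 2) * (1 - b) ≤ a₂ * ρ₀ := by
    have h1 : (r / 2) * (1 - b) ≤ (r / 2) * (c₂ * (a₂ - a₁ * b)) :=
      mul_le_mul_of_nonneg_left hkey1 (by linarith)
    have ha2b : 0 ≤ a₂ - a₁ * b := by nlinarith
    have h2 := mul_le_mul_of_nonneg_right hρ₀ ha2b
    nlinarith [h1, h2]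
  have hK2 : a₁ * ρ₀ + (r / 2) * (1 - b) ≤ a₃ * b * ρ₀ := by
    have h1 : (r / 2) * (1 - b) ≤ (r / 2) * (c₂ * (a₃ * b - a₁)) :=
      mul_le_mul_of_nonneg_left hkey2 (by linarith)
    have h2 := mul_le_mul_of_nonneg_right hρ₀ ha3b.le
    nlinarith [h1, h2]
  refine ⟨?_, ?_, ?_, ?_⟩
  · intro i _
    positivity
  · -- balls inside the cone
    intro i _ y hy
    set t : ℝ := b ^ i * (r / 2) with ht_def
    have hbi : (0:ℝ) < b ^ i := pow_pos hb0 i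
    have hbi1 : b ^ i ≤ 1 := pow_le_one₀ hb0.le hb'.le
    have ht : 0 < t := by positivity
    have hyt : ‖y - t • e‖ < t * Real.sin θ := by
      have h1 : dist y (t • e) < a₄ * (b ^ i * ρ₀) := by
        simpa [he_def] using hy
      have h2 : a₄ * (b ^ i * ρ₀) ≤ t * Real.sin θ := by
        have h3 : a₄ * ρ₀ ≤ Real.sin θ * (r / 2) := by
          have h4 := mul_le_mul_of_nonneg_left hρ₀' (by linarith : (0:ℝ) ≤ a₄)
          calc a₄ * ρ₀ ≤ a₄ * (Real.sin θ / a₄ * (r / 2)) := h4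
            _ = Real.sin θ * (r / 2) := by field_simp
        rw [ht_def]
        nlinarith [mul_le_mul_of_nonneg_left h3 hbi.le]
      rw [dist_eq_norm] at h1
      linarith
    have hinner : ‖y‖ * Real.cos θ < ⟪y, e⟫ := by
      by_contra hcon
      push_neg at hcon
      have hns : ‖y - t • e‖ ^ 2 = ‖y‖ ^ 2 - 2 * (t * ⟪y, e⟫) + t ^ 2 := by
        rw [norm_sub_sq_real, real_inner_smul_right, norm_smul, he, mul_one,
          Real.norm_eq_abs, abs_of_pos ht]
      have hd2 : ‖y - t • e‖ ^ 2 < (t * Real.sin θ) ^ 2 := by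
        nlinarith [norm_nonneg (y - t • e), hyt]
      nlinarith [sq_nonneg (‖y‖ - t * Real.cos θ),
        mul_le_mul_of_nonneg_left hcon ht.le, hd2, hns, hpyth]
    have hle : ⟪y, e⟫ ≤ ‖y‖ := by
      have h := real_inner_le_norm y e
      rwa [he, mul_one] at h
    have hy0 : 0 < ‖y‖ := by
      rcases (norm_nonneg y).eq_or_lt.imp_left Eq.symm with h | h
      · exfalso
        rw [h] at hinner hle
        nlinarith [hinner, hle]
      · exact h
    refine ⟨by simpa using hy0, ?_, ?_, ?_⟩
    · -- ‖y - 0‖ < r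
      have h1 : ‖y‖ ≤ ‖y - t • e‖ + ‖t • e‖ := by
        simpa using norm_add_le (y - t • e) (t • e)
      have h2 : ‖t • e‖ = t := by
        rw [norm_smul, he, mul_one, Real.norm_eq_abs, abs_of_pos ht]
      have h3 : b ^ i * r ≤ r := by
        have h4 := mul_le_mul_of_nonneg_right hbi1 hr.le
        linarith [h4]
      have h5 : t * Real.sin θ < t * 1 := mul_lt_mul_of_pos_left hsin1 ht
      have h6 : ‖y‖ < 2 * t := by linarith
      rw [sub_zero]
      rw [ht_def] at h6
      linarith
    · -- cos θ < inner
      rw [sub_zero, real_inner_smul_left, inv_mul_eq_div, lt_div_iff₀ hy0]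
      linarith [hinner, mul_comm (Real.cos θ) ‖y‖]
    · -- inner ≤ 1
      rw [sub_zero, real_inner_smul_left, inv_mul_eq_div, div_le_one hy0]
      exact hle
  · -- forward inclusion
    intro i hi
    have hbi : (0:ℝ) < b ^ i := pow_pos hb0 i
    have hmono : b ^ (i + 1) ≤ b ^ i := by
      rw [pow_succ]
      have := mul_le_mul_of_nonneg_left hb'.le hbi.le
      linarith [this]
    constructor
    · have h7 := mul_le_mul_of_nonneg_right hmono hρ0.le
      simpa using h7
    · apply ball_subset_ball'
      have hd : dist ((b ^ (i+1) * (r / 2)) • e) ((b ^ i * (r / 2)) • e)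
          = b ^ i * ((r / 2) * (1 - b)) := by
        rw [hdist, abs_of_nonpos (by nlinarith [mul_le_mul_of_nonneg_right hmono (by linarith : (0:ℝ) ≤ r / 2)])]
        rw [pow_succ]
        ring
      simp only
      rw [hd, pow_succ]
      linarith [mul_le_mul_of_nonneg_left hK1 hbi.le]
  · -- backward inclusion
    intro i hi
    apply ball_subset_ball'
    have hbi : (0:ℝ) < b ^ i := pow_pos hb0 i
    have hmono : b ^ (i + 1) ≤ b ^ i := by
      rw [pow_succ]
      have := mul_le_mul_of_nonneg_left hb'.le hbi.le
      linarith [this]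
    have hd : dist ((b ^ i * (r / 2)) • e) ((b ^ (i+1) * (r / 2)) • e)
        = b ^ i * ((r / 2) * (1 - b)) := by
      rw [hdist, abs_of_nonneg (by nlinarith [mul_le_mul_of_nonneg_right hmono (by linarith : (0:ℝ) ≤ r / 2)])]
      rw [pow_succ]
      ring
    simp only
    rw [hd, pow_succ]
    linarith [mul_le_mul_of_nonneg_left hK2 hbi.le]
end
end
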